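/- arXiv:2209.15513 — 3 statements merged into one kernel-verified Lean document; each statement's English description precedes it below -/
import Mathlib

section
/- Every triangulation of the punctured (n,∞)-gon P_{n,∞} contains infinitely many tagged edges. -/
/-!
STATEMENT 5: Every triangulation of the punctured `(n,∞)`-gon `P_{n,∞}` contains
infinitely many tagged edges.  Lines are indexed by `Fin (n+1)`, covering all `n ≥ 1`.
-/

namespace PuncturedGon

/-- An (unconstrained) edge datum of the punctured `(n+1,∞)`-gon. -/
structure Edge (n : ℕ) where
  p : Fin (n + 1) × ℤ
  q : Fin (n + 1) × ℤ
  sgn : ℤ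

/-- `E` is a tagged edge: `q ≠ (p₁, p₂ + 1)`, the sign is `±1`, and the sign is `+1`
whenever the two endpoints are distinct. -/
def IsTagged {n : ℕ} (E : Edge n) : Prop :=
  E.q ≠ (E.p.1, E.p.2 + 1) ∧ (E.sgn = 1 ∨ E.sgn = -1) ∧ (E.p ≠ E.q → E.sgn = 1)

/-- `σ(a) = 1/2 + a/(2(1+|a|)) ∈ (0,1)`. -/
noncomputable def sig (a : ℤ) : ℝ := 1 / 2 + (a : ℝ) / (2 * (1 + |(a : ℝ)|))

/-- The embedding of the marked points into the circle `ℝ/ℤ`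
(the `h`-th line, `h : Fin (n+1)`, occupies the arc `[h/(n+1), (h+1)/(n+1)]`). -/
noncomputable def theta (n : ℕ) (p : Fin (n + 1) × ℤ) : ℝ :=
  ((p.1.val : ℝ) + sig p.2) / (n + 1)

/-- `(x, y)` is a lift of the edge `E` (with distinct endpoints): `x ≡ θ(E.p)` and
`y ≡ θ(E.q)` modulo `1`, with `y ∈ (x, x + 1)`. -/
def IsLift {n : ℕ} (E : Edge n) (x y : ℝ) : Prop :=
  (∃ k : ℤ, x = theta n E.p + k) ∧ (∃ k : ℤ, y = theta n E.q + k) ∧ x < y ∧ y < x + 1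

/-- `E` crosses `F`. -/
def Crosses {n : ℕ} (E F : Edge n) : Prop :=
  (E.p ≠ E.q ∧ F.p ≠ F.q ∧ ∃ x₁ y₁ x₂ y₂ : ℝ,
    IsLift E x₁ y₁ ∧ IsLift F x₂ y₂ ∧
    ((x₁ < x₂ ∧ x₂ < y₁ ∧ y₁ < y₂) ∨ (x₂ < x₁ ∧ x₁ < y₂ ∧ y₂ < y₁))) ∨
  (E.p ≠ E.q ∧ F.p = F.q ∧ ∃ x y t : ℝ,
    IsLift E x y ∧ (∃ k : ℤ, t = theta n F.p + k) ∧ x < t ∧ t < y) ∨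
  (E.p = E.q ∧ F.p ≠ F.q ∧ ∃ x y t : ℝ,
    IsLift F x y ∧ (∃ k : ℤ, t = theta n E.p + k) ∧ x < t ∧ t < y) ∨
  (E.p = E.q ∧ F.p = F.q ∧ E.p ≠ F.p ∧ E.sgn ≠ F.sgn)

/-- A set of edges is pairwise non-crossing. -/
def PairwiseNoncrossing {n : ℕ} (T : Set (Edge n)) : Prop :=
  ∀ E ∈ T, ∀ F ∈ T, ¬ Crosses E F

/-- A triangulation of `P_{n+1,∞}`: a maximal set of pairwise non-crossing tagged
edges. -/
def IsTriangulation {n : ℕ} (T : Set (Edge n)) : Prop :=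
  (∀ E ∈ T, IsTagged E) ∧ PairwiseNoncrossing T ∧
    ∀ E : Edge n, IsTagged E → E ∉ T → ∃ F ∈ T, Crosses E F

end PuncturedGon

/-!
If a triangulation were finite, the heights `a` of its marked points `(h, a)` would be bounded
by some `b`. The edge from `(0, b)` to `(0, b + 2)` cuts off only the marked point `(0, b + 1)`,
so every edge crossing it ends at `(0, b + 1)`. Neither this edge nor any edge crossing it lies
in the triangulation, contradicting maximality.
-/

lemma Int.eq_of_add_lt_add_of_add_lt_add {N M : ℤ} {s t u : ℝ} (hs : 0 ≤ s) (ht₀ : 0 ≤ t)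
    (ht₁ : t ≤ 1) (hu : u ≤ 1) (h₁ : N + s < M + t) (h₂ : M + t < N + u) : M = N := by
  have hlo : (N : ℝ) < M + 1 := by linarith
  have hhi : (M : ℝ) < N + 1 := by linarith
  norm_cast at hlo hhi
  omega

lemma Fin.eq_and_eq_of_val_add_mul_eq {n : ℕ} {k h : Fin (n + 1)} {i j : ℤ}
    (H : (k : ℤ) + j * (n + 1) = h + i * (n + 1)) : k = h ∧ j = i := by
  have hmod := congrArg (· % ((n : ℤ) + 1)) H
  simp only [Int.add_mul_emod_self_right] at hmod
  rw [Int.emod_eq_of_lt (by positivity) (by omega),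
    Int.emod_eq_of_lt (by positivity) (by omega)] at hmod
  have hkh : k = h := Fin.ext (by omega)
  subst hkh
  exact ⟨rfl, by simpa [(by positivity : (n : ℤ) + 1 ≠ 0)] using H⟩

namespace PuncturedGon

lemma abs_sig_sub_half_lt (a : ℤ) : |sig a - 1 / 2| < 1 / 2 := by
  have h : (0 : ℝ) < 2 * (1 + |(a : ℝ)|) := by positivity
  rw [sig, add_sub_cancel_left, abs_div, abs_of_pos h, div_lt_iff₀ h]
  linarith

lemma sig_pos (a : ℤ) : 0 < sig a := by
  linarith [(abs_lt.1 (abs_sig_sub_half_lt a)).1]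

lemma sig_lt_one (a : ℤ) : sig a < 1 := by
  linarith [(abs_lt.1 (abs_sig_sub_half_lt a)).2]

lemma sig_strictMono : StrictMono sig := by
  intro a b hab
  have hab' : (a : ℝ) < b := by exact_mod_cast hab
  rw [sig, sig, add_lt_add_iff_left, div_lt_div_iff₀ (by positivity) (by positivity)]
  rcases abs_cases (a : ℝ) with ⟨h₁, _⟩ | ⟨h₁, _⟩ <;>
    rcases abs_cases (b : ℝ) with ⟨h₂, _⟩ | ⟨h₂, _⟩ <;> rw [h₁, h₂] <;> nlinarith

variable {n : ℕ}

lemma theta_add_intCast (p : Fin (n + 1) × ℤ) (j : ℤ) :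
    theta n p + j = (((p.1 : ℤ) + j * (n + 1) : ℤ) + sig p.2) / (n + 1) := by
  rw [theta]
  field_simp
  push_cast
  ring

lemma theta_pos (p : Fin (n + 1) × ℤ) : 0 < theta n p := by
  have := sig_pos p.2
  unfold theta
  positivity

lemma theta_lt_one (p : Fin (n + 1) × ℤ) : theta n p < 1 := by
  have := sig_lt_one p.2
  have : (p.1 : ℝ) + 1 ≤ n + 1 := by exact_mod_cast p.1.isLt
  rw [theta, div_lt_one (by positivity)]
  linarith

lemma IsLift.exists_shift {E : Edge n} {x y : ℝ} (hE : theta n E.p < theta n E.q)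
    (hL : IsLift E x y) : ∃ k : ℤ, x = theta n E.p + k ∧ y = theta n E.q + k := by
  obtain ⟨⟨k, rfl⟩, ⟨l, rfl⟩, hxy, hyx⟩ := hL
  have := theta_pos E.p
  have := theta_lt_one E.q
  have hkl : (k : ℝ) < l + 1 := by linarith
  have hlk : (l : ℝ) < k + 1 := by linarith
  norm_cast at hkl hlk
  obtain rfl : l = k := by omega
  exact ⟨_, rfl, rfl⟩

/-- The only marked point in the open arc from `(h, a)` to `(h, a + 2)` is `(h, a + 1)`. -/
lemma eq_of_theta_lt_of_lt_theta {h : Fin (n + 1)} {a i j : ℤ} {q : Fin (n + 1) × ℤ}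
    (h₁ : theta n (h, a) + i < theta n q + j) (h₂ : theta n q + j < theta n (h, a + 2) + i) :
    q = (h, a + 1) := by
  simp only [theta_add_intCast, div_lt_div_iff_of_pos_right (by positivity : (0 : ℝ) < n + 1)]
    at h₁ h₂
  obtain ⟨hq, rfl⟩ := Fin.eq_and_eq_of_val_add_mul_eq <|
    Int.eq_of_add_lt_add_of_add_lt_add (sig_pos a).le (sig_pos q.2).le (sig_lt_one q.2).le
      (sig_lt_one (a + 2)).le h₁ h₂
  rw [hq, add_lt_add_iff_left, sig_strictMono.lt_iff_lt] at h₁ h₂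
  exact Prod.ext hq (by omega)

def shortEdge (n : ℕ) (h : Fin (n + 1)) (a : ℤ) : Edge n := ⟨(h, a), (h, a + 2), 1⟩

lemma isTagged_shortEdge (h : Fin (n + 1)) (a : ℤ) : IsTagged (shortEdge n h a) :=
  ⟨by simp [shortEdge], Or.inl rfl, fun _ => rfl⟩

lemma shortEdge_p_ne_q (h : Fin (n + 1)) (a : ℤ) : (shortEdge n h a).p ≠ (shortEdge n h a).q := by
  simp [shortEdge]

lemma eq_of_isLift_shortEdge {h : Fin (n + 1)} {a : ℤ} {x y : ℝ}
    (hL : IsLift (shortEdge n h a) x y) {r : Fin (n + 1) × ℤ} {k : ℤ}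
    (h₁ : x < theta n r + k) (h₂ : theta n r + k < y) : r = (h, a + 1) := by
  have hlt : theta n (shortEdge n h a).p < theta n (shortEdge n h a).q := by
    simp only [shortEdge, theta]
    gcongr
    exact sig_strictMono (by omega)
  obtain ⟨m, rfl, rfl⟩ := hL.exists_shift hlt
  exact eq_of_theta_lt_of_lt_theta h₁ h₂

lemma endpoint_eq_of_crosses_shortEdge {h : Fin (n + 1)} {a : ℤ} {F : Edge n}
    (hC : Crosses (shortEdge n h a) F) : F.p = (h, a + 1) ∨ F.q = (h, a + 1) := by
  rcases hC with ⟨-, -, x, y, x', y', hL, ⟨⟨k, rfl⟩, ⟨l, rfl⟩, -⟩, ⟨h₁, h₂, -⟩ | ⟨-, h₁, h₂⟩⟩ |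
      ⟨-, -, x, y, t, hL, ⟨k, rfl⟩, h₁, h₂⟩ | ⟨hpq, -⟩ | ⟨hpq, -⟩
  · exact .inl (eq_of_isLift_shortEdge hL h₁ h₂)
  · exact .inr (eq_of_isLift_shortEdge hL h₁ h₂)
  · exact .inl (eq_of_isLift_shortEdge hL h₁ h₂)
  all_goals exact absurd hpq (shortEdge_p_ne_q h a)

/-- every triangulation of `P_{n+1,∞}` is infinite. -/
theorem triangulation_infinite (n : ℕ) (T : Set (Edge n)) (hT : IsTriangulation T) :
    T.Infinite := by
  intro hfin
  obtain ⟨b, hb⟩ := (hfin.image fun E => max E.p.2 E.q.2).bddAbove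
  have hbound : ∀ E ∈ T, E.p.2 ≤ b ∧ E.q.2 ≤ b := fun E hE =>
    max_le_iff.1 (hb (Set.mem_image_of_mem _ hE))
  have hnotin : shortEdge n 0 b ∉ T := fun hmem => by
    simpa [shortEdge] using (hbound _ hmem).2
  obtain ⟨F, hF, hC⟩ := hT.2.2 _ (isTagged_shortEdge 0 b) hnotin
  rcases endpoint_eq_of_crosses_shortEdge hC with hp | hq
  · simpa [hp] using (hbound F hF).1
  · simpa [hq] using (hbound F hF).2

end PuncturedGon
end

section
/- Let T be a set of pairwise non-crossing tagged edges of P_{n,∞}, and suppose there exists a ∈ ℤ such that none of the marked points (1,a), (1,a+1), (1,a+2) occurs as an endpoint of an edge of T. Then the tagged edge E_{(1,a),(1,a+2)} does not belong to T and crosses no element of T; hence T ∪ {E_{(1,a),(1,a+2)}} is again pairwise non-crossing and T is not a triangulation of P_{n,∞}. -/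
namespace PuncturedGon

lemma sig_lt_sig {a b : ℤ} (h : a < b) : sig a < sig b := by
  unfold sig
  have hab : (a:ℝ) < b := by exact_mod_cast h
  have hda : (0:ℝ) < 2 * (1 + |(a:ℝ)|) := by positivity
  have hdb : (0:ℝ) < 2 * (1 + |(b:ℝ)|) := by positivity
  have : (a:ℝ) / (2 * (1 + |(a:ℝ)|)) < (b:ℝ) / (2 * (1 + |(b:ℝ)|)) := by
    rw [div_lt_div_iff₀ hda hdb]
    rcases abs_cases (a:ℝ) with ⟨ha1, _⟩ | ⟨ha1, _⟩ <;>
      rcases abs_cases (b:ℝ) with ⟨hb1, _⟩ | ⟨hb1, _⟩ <;> nlinarith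
  linarith

lemma lt_of_sig_lt {a b : ℤ} (h : sig a < sig b) : a < b := by
  by_contra hc
  push_neg at hc
  rcases eq_or_lt_of_le hc with rfl | hlt
  · exact lt_irrefl _ h
  · exact absurd (sig_lt_sig hlt) (by linarith)

/-- The key geometric fact: any marked point whose angle (mod 1) lies strictly
between `θ(0,a)` and `θ(0,a+2)` must be `(0, a+1)`. -/
lemma point_between {n : ℕ} {a : ℤ} {p : Fin (n+1) × ℤ} {t : ℝ}
    (ht : ∃ k : ℤ, t = theta n p + k)
    (h1 : theta n ((0 : Fin (n+1)), a) < t)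
    (h2 : t < theta n ((0 : Fin (n+1)), a + 2)) :
    p = ((0 : Fin (n+1)), a + 1) := by
  obtain ⟨k, rfl⟩ := ht
  have hsa0 := sig_pos a
  have hsa1 := sig_lt_one a
  have hsa20 := sig_pos (a+2)
  have hsa21 := sig_lt_one (a+2)
  have hsp0 := sig_pos p.2
  have hsp1 := sig_lt_one p.2
  have hn : (0:ℝ) < (n:ℝ) + 1 := by positivity
  unfold theta at h1 h2
  simp only [Fin.val_zero, Nat.cast_zero, zero_add] at h1 h2
  have hp1 : (p.1.val : ℝ) ≤ n := by exact_mod_cast Nat.le_of_lt_succ p.1.isLt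
  have hp0 : (0:ℝ) ≤ (p.1.val : ℝ) := Nat.cast_nonneg _
  have hθp1 : ((p.1.val : ℝ) + sig p.2) / ((n:ℝ) + 1) < 1 := by
    rw [div_lt_one hn]; linarith
  have hθp0 : 0 < ((p.1.val : ℝ) + sig p.2) / ((n:ℝ) + 1) := by positivity
  have hub : sig (a+2) / ((n:ℝ) + 1) ≤ 1 := by
    rw [div_le_one hn]; linarith
  have hlb : (0:ℝ) ≤ sig a / ((n:ℝ) + 1) := by positivity
  have hk : k = 0 := by
    have hk1 : (-1:ℝ) < k := by linarith
    have hk2 : (k:ℝ) < 1 := by linarith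
    have : -1 < k ∧ k < 1 := ⟨by exact_mod_cast hk1, by exact_mod_cast hk2⟩
    omega
  subst hk
  simp only [Int.cast_zero, add_zero] at h1 h2
  have h1' : sig a < (p.1.val : ℝ) + sig p.2 := by
    have := (div_lt_div_iff₀ hn hn).mp h1
    nlinarith
  have h2' : (p.1.val : ℝ) + sig p.2 < sig (a+2) := by
    have := (div_lt_div_iff₀ hn hn).mp h2
    nlinarith
  have hv : (p.1.val : ℝ) < 1 := by linarith
  have hv0 : p.1.val = 0 := by
    have : p.1.val < 1 := by exact_mod_cast hv
    omega
  have hfst : p.1 = (0 : Fin (n+1)) := Fin.ext (by simp [hv0])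
  rw [hv0] at h1' h2'
  simp only [Nat.cast_zero, zero_add] at h1' h2'
  have hlt1 : a < p.2 := lt_of_sig_lt h1'
  have hlt2 : p.2 < a + 2 := lt_of_sig_lt h2'
  have hsnd : p.2 = a + 1 := by omega
  exact Prod.ext hfst hsnd

/-- Any point lying (mod 1) strictly inside a lift of the edge `E₀ = E_{(0,a),(0,a+2)}`
is `(0, a+1)`. -/
lemma lift_between {n : ℕ} {a : ℤ} {x y t : ℝ} {p : Fin (n+1) × ℤ}
    (hl : IsLift (⟨((0 : Fin (n+1)), a), ((0 : Fin (n+1)), a + 2), 1⟩ : Edge n) x y)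
    (ht : ∃ k : ℤ, t = theta n p + k) (hxt : x < t) (hty : t < y) :
    p = ((0 : Fin (n+1)), a + 1) := by
  obtain ⟨⟨k₁, hx⟩, ⟨k₂, hy⟩, hxy, hyx⟩ := hl
  obtain ⟨k, htk⟩ := ht
  simp only at hx hy
  have hn : (0:ℝ) < (n:ℝ) + 1 := by positivity
  have hn1 : (1:ℝ) ≤ (n:ℝ) + 1 := by
    have : (0:ℝ) ≤ (n:ℝ) := Nat.cast_nonneg _
    linarith
  have hδ0 : theta n ((0 : Fin (n+1)), a) < theta n ((0 : Fin (n+1)), a + 2) := by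
    unfold theta
    simp only [Fin.val_zero, Nat.cast_zero, zero_add]
    have hs := sig_lt_sig (show a < a + 2 by omega)
    gcongr
  have hδ1 : theta n ((0 : Fin (n+1)), a + 2) - theta n ((0 : Fin (n+1)), a) < 1 := by
    unfold theta
    simp only [Fin.val_zero, Nat.cast_zero, zero_add]
    rw [div_sub_div_same, div_lt_one hn]
    have h1 := sig_pos a
    have h2 := sig_lt_one (a+2)
    linarith
  have hk12 : k₂ = k₁ := by
    have e1 : (-1:ℝ) < (k₂:ℝ) - k₁ := by
      have : 0 < y - x := by linarith
      rw [hx, hy] at this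
      linarith
    have e2 : ((k₂:ℝ) - k₁) < 1 := by
      have : y - x < 1 := by linarith
      rw [hx, hy] at this
      linarith
    have e1' : (-1:ℤ) < k₂ - k₁ := by exact_mod_cast e1
    have e2' : k₂ - k₁ < 1 := by exact_mod_cast e2
    omega
  subst hk12
  refine point_between (p := p) (t := t - k₂) ⟨k - k₂, by rw [htk]; push_cast; ring⟩ ?_ ?_
  · rw [hx] at hxt; linarith
  · rw [hy] at hty; linarith

theorem not_triangulation_of_gap (n : ℕ) (T : Set (Edge n))
    (hT : ∀ E ∈ T, IsTagged E) (hnc : PairwiseNoncrossing T) (a : ℤ)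
    (ha : ∀ F ∈ T, ∀ b : ℤ, (b = a ∨ b = a + 1 ∨ b = a + 2) →
      F.p ≠ ((0 : Fin (n + 1)), b) ∧ F.q ≠ ((0 : Fin (n + 1)), b)) :
    (⟨((0 : Fin (n + 1)), a), ((0 : Fin (n + 1)), a + 2), 1⟩ : Edge n) ∉ T ∧
    (∀ F ∈ T, ¬ Crosses (⟨((0 : Fin (n + 1)), a), ((0 : Fin (n + 1)), a + 2), 1⟩ : Edge n) F) ∧
    PairwiseNoncrossing
      (insert (⟨((0 : Fin (n + 1)), a), ((0 : Fin (n + 1)), a + 2), 1⟩ : Edge n) T) ∧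
    ¬ IsTriangulation T := by
  set E₀ : Edge n := ⟨((0 : Fin (n + 1)), a), ((0 : Fin (n + 1)), a + 2), 1⟩ with hE₀
  have hpq : E₀.p ≠ E₀.q := by
    simp only [hE₀, ne_eq, Prod.mk.injEq]
    omega
  have hnotin : E₀ ∉ T := fun h => (ha E₀ h a (Or.inl rfl)).1 rfl
  have hmid : ∀ F ∈ T, ∀ r : Fin (n+1) × ℤ,
      (r = F.p ∨ r = F.q) → r ≠ ((0 : Fin (n+1)), a + 1) := by
    intro F hF r hr
    rcases hr with rfl | rfl
    · exact (ha F hF (a+1) (Or.inr (Or.inl rfl))).1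
    · exact (ha F hF (a+1) (Or.inr (Or.inl rfl))).2
  have hcr : ∀ F ∈ T, ¬ Crosses E₀ F := by
    rintro F hF (⟨-, -, x₁, y₁, x₂, y₂, hl1, hl2, hcase⟩ |
      ⟨-, -, x, y, t, hl, ht, h1, h2⟩ | ⟨h, -⟩ | ⟨h, -⟩)
    · rcases hcase with ⟨c1, c2, c3⟩ | ⟨c1, c2, c3⟩
      · exact hmid F hF F.p (Or.inl rfl) (lift_between hl1 hl2.1 c1 c2)
      · exact hmid F hF F.q (Or.inr rfl) (lift_between hl1 hl2.2.1 c2 c3)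
    · exact hmid F hF F.p (Or.inl rfl) (lift_between hl ht h1 h2)
    · exact hpq h
    · exact hpq h
  have hcr' : ∀ F ∈ T, ¬ Crosses F E₀ := by
    rintro F hF (⟨-, -, x₁, y₁, x₂, y₂, hl1, hl2, hcase⟩ |
      ⟨-, h, -⟩ | ⟨hFp, -, x, y, t, hl, ht, h1, h2⟩ | ⟨-, h, -⟩)
    · rcases hcase with ⟨c1, c2, c3⟩ | ⟨c1, c2, c3⟩
      · exact hmid F hF F.q (Or.inr rfl) (lift_between hl2 hl1.2.1 c2 c3)
      · exact hmid F hF F.p (Or.inl rfl) (lift_between hl2 hl1.1 c1 c2)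
    · exact hpq h
    · exact hmid F hF F.p (Or.inl rfl) (lift_between hl ht h1 h2)
    · exact hpq h
  have hself : ¬ Crosses E₀ E₀ := by
    rintro (⟨-, -, x₁, y₁, x₂, y₂, hl1, hl2, hcase⟩ |
      ⟨-, h, -⟩ | ⟨h, -⟩ | ⟨h, -⟩)
    · rcases hcase with ⟨c1, c2, c3⟩ | ⟨c1, c2, c3⟩
      · have := lift_between hl1 hl2.1 c1 c2
        simp only [hE₀, Prod.mk.injEq] at this
        omega
      · have := lift_between hl1 hl2.2.1 c2 c3
        simp only [hE₀, Prod.mk.injEq] at this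
        omega
    · exact hpq h
    · exact hpq h
    · exact hpq h
  refine ⟨hnotin, hcr, ?_, ?_⟩
  · rintro E (rfl | hE) F (rfl | hF)
    · exact hself
    · exact hcr F hF
    · exact hcr' E hE
    · exact hnc E hE F hF
  · rintro ⟨-, -, h3⟩
    have htag : IsTagged E₀ := by
      refine ⟨?_, Or.inl rfl, fun _ => rfl⟩
      simp only [hE₀, ne_eq, Prod.mk.injEq]
      omega
    obtain ⟨F, hF, hc⟩ := h3 E₀ htag hnotin
    exact hcr F hF hc

end PuncturedGon
end

section
/- Let N be the representation of the poset 𝔻_{n,∞} with N(w) = k for every w ∈ B₁⁻ ∪ {(1,−1),(1,−1′)} and N(w) = 0 otherwise, all structure maps between nonzero values being the identity of k. Then N is pointwise finite-dimensional, but there is no epimorphism (no natural transformation that is surjective at every vertex) from any finite direct sum of representable projectives P_{v₁} ⊕ ⋯ ⊕ P_{v_r} onto N; in particular N is not finitely generated by representable projectives. -/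
/-!
STATEMENT 13: Let `N` be the representation of the poset `𝔻_{n,∞}` with `N(w) = k` for
every `w ∈ B₁⁻ ∪ {(1,-1),(1,-1')}` and `N(w) = 0` otherwise, all structure maps between
nonzero values being the identity of `k`.  Then `N` is pointwise finite-dimensional,
but there is no epimorphism (no natural transformation surjective at every vertex) from
any finite direct sum of representable projectives `P_{v₁} ⊕ ⋯ ⊕ P_{v_r}` onto `N`; in
particular `N` is not finitely generated by representable projectives.

The poset `𝔻_{n+1,∞}` (covering all `n ≥ 1`): the linear order `C` (blocks
`B₁⁺ < B₂ < ⋯ < B_{n+1} < B₁⁻`, with `B₁⁻ = {(1,m) : m ≤ -2}`, here `{(0,m) : m ≤ -2}`)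
together with two incomparable elements `t1, t2` greater than everything in `C`.
A value `k` resp. `0` is encoded as the one- resp. zero-dimensional space of functions
`PLift _ → k`.
-/

open scoped Classical

namespace DInfty


/-- Marked-point data indexing the linear order `C`. -/
abbrev MP (n : ℕ) := Fin (n + 1) × ℤ

/-- Membership in `C`: everything except `(1,-1)` and `(1,0)` (here `(0,-1)`, `(0,0)`). -/
def InC (n : ℕ) (p : MP n) : Prop := p ≠ (0, -1) ∧ p ≠ (0, 0)

/-- Block index: `B₁⁺` is block `0`, `B_j` (`p.1 ≠ 0`) is block `p.1`, `B₁⁻` is block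
`n+1`. -/
def blk (n : ℕ) (p : MP n) : ℕ :=
  if p.1 = 0 then (if 1 ≤ p.2 then 0 else n + 1) else p.1.val

/-- The linear order of `C`. -/
def Cle (n : ℕ) (p q : MP n) : Prop :=
  blk n p < blk n q ∨ (blk n p = blk n q ∧ p.2 ≤ q.2)

/-- The vertices of the poset `𝔻_{n+1,∞}`: the elements of `C` and two extra elements
`t1 = (1,-1)` and `t2 = (1,-1')`. -/
inductive DVtx (n : ℕ) where
  | c : {p : MP n // InC n p} → DVtx n
  | t1 : DVtx n
  | t2 : DVtx n

/-- The order of `𝔻_{n+1,∞}`: `C` is ordered as above, `t1` and `t2` are incomparable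
to each other and greater than every element of `C`. -/
def Dle (n : ℕ) : DVtx n → DVtx n → Prop
  | .c p, .c q => Cle n p.1 q.1
  | .c _, .t1 => True
  | .c _, .t2 => True
  | .t1, .t1 => True
  | .t2, .t2 => True
  | _, _ => False

/-- A representation of the poset with vertex set `DVtx n` and order relation `r`, over
the field `k`: a functor to `k`-vector spaces. -/
structure DRep (n : ℕ) (k : Type) [Field k] (r : DVtx n → DVtx n → Prop) where
  V : DVtx n → Type
  [inst : ∀ v, AddCommGroup (V v)]
  [mod : ∀ v, Module k (V v)]
  map : ∀ {v w : DVtx n}, r v w → (V v →ₗ[k] V w)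
  map_id : ∀ (v : DVtx n) (h : r v v), map h = LinearMap.id
  map_comp : ∀ {u v w : DVtx n} (h₁ : r u v) (h₂ : r v w) (h₃ : r u w),
    map h₃ = (map h₂).comp (map h₁)

attribute [instance] DRep.inst DRep.mod

/-- Morphisms of representations: natural transformations. -/
structure DHom {n : ℕ} {k : Type} [Field k] {r : DVtx n → DVtx n → Prop}
    (M N : DRep n k r) where
  app : ∀ v, M.V v →ₗ[k] N.V v
  natural : ∀ {v w : DVtx n} (h : r v w),
    (app w).comp (M.map h) = (N.map h).comp (app v)

/-- Pointwise finite-dimensionality. -/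
def Pwf {n : ℕ} {k : Type} [Field k] {r : DVtx n → DVtx n → Prop}
    (M : DRep n k r) : Prop :=
  ∀ v, FiniteDimensional k (M.V v)

lemma Cle_trans {n : ℕ} {p q s : MP n} (h1 : Cle n p q) (h2 : Cle n q s) :
    Cle n p s := by
  unfold Cle at *
  omega

lemma Dle_trans {n : ℕ} {u v w : DVtx n} (h1 : Dle n u v) (h2 : Dle n v w) :
    Dle n u w := by
  cases u <;> cases v <;> cases w <;>
    first
      | exact False.elim h1
      | exact False.elim h2
      | trivial
      | exact Cle_trans h1 h2

/-- The representation associated with an up-closed set of vertices `S`: value `k` on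
`S` (encoded as `PLift (S v) → k`), value `0` elsewhere, identities between the nonzero
values. -/
noncomputable def upRep (n : ℕ) (k : Type) [Field k] (S : DVtx n → Prop)
    (hS : ∀ {u v : DVtx n}, Dle n u v → S u → S v) : DRep n k (Dle n) where
  V v := PLift (S v) → k
  map {v w} _h :=
    { toFun := fun f _hw => if hv : S v then f ⟨hv⟩ else 0
      map_add' := by
        intro f g
        funext hw
        by_cases hv : S v <;> simp [hv]
      map_smul' := by
        intro c f
        funext hw
        by_cases hv : S v <;> simp [hv] }
  map_id := by
    intro v h
    refine LinearMap.ext fun f => funext fun hv => ?_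
    show (if hv' : S v then f ⟨hv'⟩ else 0) = f hv
    rw [dif_pos hv.down]
  map_comp := by
    intro u v w h₁ h₂ h₃
    refine LinearMap.ext fun f => funext fun hw => ?_
    show (if hu : S u then f ⟨hu⟩ else 0)
        = (if hv : S v then (if hu : S u then f ⟨hu⟩ else 0) else 0)
    by_cases hu : S u
    · have hv : S v := hS h₁ hu
      rw [dif_pos hu, dif_pos hv]
    · rw [dif_neg hu]
      by_cases hv : S v
      · rw [dif_pos hv]
      · rw [dif_neg hv]

/-- The representable projective `P_v`. -/
noncomputable def Proj (n : ℕ) (k : Type) [Field k] (v : DVtx n) : DRep n k (Dle n) :=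
  upRep n k (fun w => Dle n v w) (fun h hv => Dle_trans hv h)

/-- The finite direct sum of a family of representations. -/
noncomputable def dsum {n : ℕ} {k : Type} [Field k] {r : ℕ}
    (M : Fin r → DRep n k (Dle n)) : DRep n k (Dle n) where
  V w := ∀ i, (M i).V w
  map h := LinearMap.pi fun i => ((M i).map h).comp (LinearMap.proj i)
  map_id := by
    intro v h
    refine LinearMap.ext fun f => funext fun i => ?_
    show ((M i).map h) (f i) = f i
    rw [(M i).map_id v h]
    rfl
  map_comp := by
    intro u v w h₁ h₂ h₃
    refine LinearMap.ext fun f => funext fun i => ?_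
    show ((M i).map h₃) (f i) = ((M i).map h₂) (((M i).map h₁) (f i))
    rw [(M i).map_comp h₁ h₂ h₃]
    rfl


/-- The up-closed subset `B₁⁻ ∪ {(1,-1),(1,-1')}` of `𝔻_{n+1,∞}`. -/
def inN (n : ℕ) : DVtx n → Prop
  | .c p => p.1.1 = 0 ∧ p.1.2 ≤ -2
  | .t1 => True
  | .t2 => True

lemma inN_up {n : ℕ} {u v : DVtx n} (h : Dle n u v) (hu : inN n u) : inN n v := by
  cases u with
  | t1 =>
    cases v with
    | t1 => trivial
    | t2 => exact False.elim h
    | c q => exact False.elim h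
  | t2 =>
    cases v with
    | t1 => exact False.elim h
    | t2 => trivial
    | c q => exact False.elim h
  | c p =>
    cases v with
    | t1 => trivial
    | t2 => trivial
    | c q =>
      obtain ⟨hp0, hp2⟩ := hu
      have h' : Cle n p.1 q.1 := h
      have hq := q.2
      unfold Cle blk at h'
      rw [if_pos hp0] at h'
      have hnot : ¬ (1 : ℤ) ≤ p.1.2 := by omega
      rw [if_neg hnot] at h'
      by_cases hq0 : q.1.1 = 0
      · rw [if_pos hq0] at h'
        refine ⟨hq0, ?_⟩
        by_cases h1q : (1 : ℤ) ≤ q.1.2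
        · rw [if_pos h1q] at h'
          omega
        · rw [if_neg h1q] at h'
          have hne1 : q.1.2 ≠ -1 := fun hc => hq.1 (Prod.ext hq0 hc)
          have hne2 : q.1.2 ≠ 0 := fun hc => hq.2 (Prod.ext hq0 hc)
          omega
      · exfalso
        rw [if_neg hq0] at h'
        have hlt := q.1.1.isLt
        omega

/-- The representation `N`: value `k` on `B₁⁻ ∪ {(1,-1),(1,-1')}`, value `0` elsewhere,
all structure maps between nonzero values the identity of `k`. -/
noncomputable def Nrep (n : ℕ) (k : Type) [Field k] : DRep n k (Dle n) :=
  upRep n k (inN n) (fun h hu => inN_up h hu)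

/-!
A morphism from `P_{v₁} ⊕ ⋯ ⊕ P_{v_r}` is determined by the images of the generators at
the `vᵢ`: at a vertex `w`, every element of the sum is pushed forward from the summands
with `vᵢ ≤ w`, so by naturality the image at `w` is pushed forward from the values of the
target at those `vᵢ`. Since `B₁⁻` has no minimum, there is `w ∈ B₁⁻` strictly below every
`vᵢ` in `B₁⁻`; then `N` vanishes at every `vᵢ ≤ w`, so the morphism is zero at `w`,
although `N(w) = k`.
-/

variable {n : ℕ} {k : Type} [Field k]

lemma Dle_refl (v : DVtx n) : Dle n v v := by
  cases v with
  | c p => exact Or.inr ⟨rfl, le_rfl⟩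
  | t1 | t2 => trivial

section upRep

variable {S : DVtx n → Prop} {hS : ∀ {u v : DVtx n}, Dle n u v → S u → S v}

lemma upRep_pwf : Pwf (upRep n k S hS) := fun _ =>
  inferInstanceAs (FiniteDimensional k (PLift _ → k))

lemma upRep_subsingleton {v : DVtx n} (hv : ¬ S v) : Subsingleton ((upRep n k S hS).V v) :=
  ⟨fun _ _ => funext fun h => absurd h.down hv⟩

lemma upRep_map_surjective {v w : DVtx n} (h : Dle n v w) (hv : S v) :
    Function.Surjective ((upRep n k S hS).map h) := fun g =>
  ⟨fun _ => g ⟨hS h hv⟩, funext fun hw => by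
    show (if hv' : S v then g ⟨hS h hv⟩ else 0) = g hw
    rw [dif_pos hv, Subsingleton.elim hw]⟩

end upRep

lemma Proj_map_surjective {v w : DVtx n} (h : Dle n v w) :
    Function.Surjective ((Proj n k v).map h) :=
  upRep_map_surjective h (Dle_refl v)

lemma dsum_map_single {r : ℕ} (M : Fin r → DRep n k (Dle n)) {v w : DVtx n}
    (h : Dle n v w) (i : Fin r) (y : (M i).V v) :
    (dsum M).map h (Pi.single i y) = Pi.single i ((M i).map h y) := by
  funext j
  show (M j).map h ((Pi.single i y : ∀ j, (M j).V v) j)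
    = (Pi.single i ((M i).map h y) : ∀ j, (M j).V w) j
  by_cases hij : j = i
  · subst hij
    rw [Pi.single_eq_same, Pi.single_eq_same]
  · rw [Pi.single_eq_of_ne hij, Pi.single_eq_of_ne hij, map_zero]

lemma DHom.app_eq_zero_of_subsingleton {r : ℕ} {vs : Fin r → DVtx n} {M : DRep n k (Dle n)}
    (φ : DHom (dsum fun i => Proj n k (vs i)) M) {w : DVtx n}
    (hM : ∀ i, Dle n (vs i) w → Subsingleton (M.V (vs i))) : φ.app w = 0 := by
  refine LinearMap.ext fun x => ?_
  rw [← Finset.univ_sum_single x]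
  refine (map_sum (φ.app w) _ _).trans ?_
  refine Finset.sum_eq_zero fun i _ => ?_
  by_cases hi : Dle n (vs i) w
  · obtain ⟨y, hy⟩ := upRep_map_surjective (k := k) (hS := fun h hv => Dle_trans hv h) hi
      (Dle_refl (vs i)) (x i)
    have := hM i hi
    rw [← hy]
    calc φ.app w (Pi.single i ((Proj n k (vs i)).map hi y))
        = φ.app w ((dsum fun i => Proj n k (vs i)).map hi (Pi.single i y)) :=
          congrArg _ (dsum_map_single (fun i => Proj n k (vs i)) hi i y).symm
      _ = M.map hi (φ.app (vs i) (Pi.single i y)) := LinearMap.congr_fun (φ.natural hi) _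
      _ = M.map hi 0 := congrArg _ (Subsingleton.elim _ _)
      _ = 0 := map_zero _
  · have : Subsingleton ((Proj n k (vs i)).V w) := upRep_subsingleton hi
    rw [Subsingleton.elim (α := (Proj n k (vs i)).V w) (x i) 0, Pi.single_zero]
    exact map_zero (φ.app w)

def DVtx.snd : DVtx n → ℤ
  | .c p => p.1.2
  | .t1 | .t2 => 0

lemma snd_le_of_Dle_of_inN {p q : {p : MP n // InC n p}} (h : Dle n (.c p) (.c q))
    (hp : inN n (.c p)) (hq : inN n (.c q)) : p.1.2 ≤ q.1.2 := by
  obtain ⟨hp0, hp2⟩ := hp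
  obtain ⟨hq0, hq2⟩ := hq
  have hblk : ∀ s : MP n, s.1 = 0 → s.2 ≤ -2 → blk n s = n + 1 := fun s hs0 hs2 => by
    rw [blk, if_pos hs0, if_neg (by omega)]
  have h' : Cle n p.1 q.1 := h
  rw [Cle, hblk _ hp0 hp2, hblk _ hq0 hq2] at h'
  omega

lemma exists_inN_forall_not_inN_of_le {ι : Type} [Finite ι] (vs : ι → DVtx n) :
    ∃ w, inN n w ∧ ∀ i, Dle n (vs i) w → ¬ inN n (vs i) := by
  obtain ⟨m, hm⟩ := Finite.exists_ge fun i => (vs i).snd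
  set M := min m (-2) - 1
  have hM : InC n (0, M) := by
    constructor <;> simp only [ne_eq, Prod.mk.injEq, true_and] <;> omega
  have hinN : inN n (.c ⟨(0, M), hM⟩) := ⟨rfl, show M ≤ -2 by omega⟩
  refine ⟨.c ⟨(0, M), hM⟩, hinN, fun i => ?_⟩
  have key : ∀ v : DVtx n, m ≤ v.snd → Dle n v (.c ⟨(0, M), hM⟩) → ¬ inN n v := by
    rintro (p | _ | _) hmv hle hin
    · have := snd_le_of_Dle_of_inN hle hin hinN
      simp only [DVtx.snd] at hmv this
      omega
    · exact hle
    · exact hle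
  exact key _ (hm i)

/-- `N` is pointwise finite-dimensional, but no finite direct sum of
representable projectives admits a natural transformation onto `N` that is surjective
at every vertex; in particular `N` is not finitely generated by representable
projectives. -/
theorem Nrep_pwf_not_finitely_generated (n : ℕ) (k : Type) [Field k] :
    Pwf (Nrep n k) ∧
    ¬ ∃ (r : ℕ) (vs : Fin r → DVtx n)
        (φ : DHom (dsum fun i => Proj n k (vs i)) (Nrep n k)),
        ∀ w, Function.Surjective (φ.app w) := by
  refine ⟨upRep_pwf, ?_⟩
  rintro ⟨r, vs, φ, hsurj⟩
  obtain ⟨w, hw, hvs⟩ := exists_inN_forall_not_inN_of_le vs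
  have hφw : φ.app w = 0 :=
    φ.app_eq_zero_of_subsingleton fun i hi => upRep_subsingleton (hvs i hi)
  obtain ⟨x, hx⟩ := hsurj w fun _ => 1
  rw [hφw] at hx
  exact zero_ne_one (congrFun hx ⟨hw⟩)

end DInfty
end
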